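/- arXiv:1208.0902 — 6 statements merged into one kernel-verified Lean document; each statement's English description precedes it below -/
import Mathlib

section
/- Let V be a finite set of points in the Euclidean plane such that any two distinct points of V have mutual distance at least d = θR for constants θ > 0 and R > 0, and let κ > 2. Then for every point v ∈ V, the sum over w ∈ V \ {v} of R^κ / d(w,v)^κ is at most (2^{2κ+1} √3 π κ) / (6(κ−2) θ^κ). -/
/-!
Split the points w ≠ v into dyadic shells `2 ^ j * d ≤ dist w v < 2 ^ (j + 1) * d`, where
`d = θ * R`. The disjoint balls of radius `d / 2` about the points of shell `j` lie in the ball of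
radius `(2 ^ (j + 2) + 1) * d / 2` about `v`, so comparing areas the shell has at most
`(2 ^ (j + 2) + 1) ^ 2 ≤ 25 * 4 ^ j` points, each contributing at most `2 ^ (-κ * j) / θ ^ κ`.
For `κ > 2` these bounds form a geometric series with sum `25 / ((1 - 2 ^ (2 - κ)) * θ ^ κ)`,
and an elementary estimate shows that this is below the stated constant.
-/

open MeasureTheory Metric Module Finset

theorem two_pow_log_floor_le {x : ℝ} (hx : 1 ≤ x) : (2 : ℝ) ^ Nat.log 2 ⌊x⌋₊ ≤ x := by
  have h : 2 ^ Nat.log 2 ⌊x⌋₊ ≤ ⌊x⌋₊ := Nat.pow_log_le_self 2 (Nat.floor_pos.2 hx).ne'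
  calc (2 : ℝ) ^ Nat.log 2 ⌊x⌋₊ ≤ ⌊x⌋₊ := by exact_mod_cast h
    _ ≤ x := Nat.floor_le (by linarith)

theorem lt_two_pow_log_floor_succ (x : ℝ) : x < 2 ^ (Nat.log 2 ⌊x⌋₊ + 1) := by
  have h : ⌊x⌋₊ + 1 ≤ 2 ^ (Nat.log 2 ⌊x⌋₊ + 1) := Nat.lt_pow_succ_log_self one_lt_two _
  calc x < ⌊x⌋₊ + 1 := Nat.lt_floor_add_one x
    _ ≤ 2 ^ (Nat.log 2 ⌊x⌋₊ + 1) := by exact_mod_cast h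

section Separated

variable {E : Type*} [NormedAddCommGroup E] [NormedSpace ℝ E] [FiniteDimensional ℝ E]

theorem card_mul_pow_le_of_pairwise_le_dist [Nontrivial E] (S : Finset E) (v : E) {δ ρ : ℝ}
    (hδ : 0 < δ) (hρ : 0 ≤ ρ) (hS : ∀ w ∈ S, dist w v ≤ ρ)
    (hsep : (S : Set E).Pairwise fun a b => δ ≤ dist a b) :
    (#S : ℝ) * (δ / 2) ^ finrank ℝ E ≤ (ρ + δ / 2) ^ finrank ℝ E := by
  borelize E
  let μ : Measure E := Measure.addHaar
  have hdisj : (S : Set E).PairwiseDisjoint fun w => ball w (δ / 2) :=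
    hsep.mono' fun a b hab => ball_disjoint_ball (by linarith)
  have hsub : (⋃ w ∈ S, ball w (δ / 2)) ⊆ ball v (ρ + δ / 2) := by
    simp only [Set.iUnion_subset_iff]
    intro w hw
    exact ball_subset_ball' (by linarith [hS w hw])
  have hvol : ∑ w ∈ S, μ (ball w (δ / 2)) ≤ μ (ball v (ρ + δ / 2)) := by
    rw [← measure_biUnion_finset hdisj fun w _ => measurableSet_ball]
    exact measure_mono hsub
  simp only [Measure.addHaar_ball μ _ (by positivity : (0 : ℝ) ≤ δ / 2),
    Measure.addHaar_ball μ _ (by positivity : (0 : ℝ) ≤ ρ + δ / 2), sum_const, nsmul_eq_mul,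
    ← mul_assoc] at hvol
  rw [ENNReal.mul_le_mul_iff_left (measure_ball_pos μ _ one_pos).ne' measure_ball_lt_top.ne,
    ← ENNReal.ofReal_natCast, ← ENNReal.ofReal_mul (by positivity)] at hvol
  exact (ENNReal.ofReal_le_ofReal_iff (by positivity)).1 hvol

theorem card_le_of_pairwise_le_dist (S : Finset E) (v : E) {δ ρ : ℝ}
    (hδ : 0 < δ) (hρ : 0 ≤ ρ) (hS : ∀ w ∈ S, dist w v ≤ ρ)
    (hsep : (S : Set E).Pairwise fun a b => δ ≤ dist a b) :
    (#S : ℝ) ≤ (2 * ρ / δ + 1) ^ finrank ℝ E := by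
  cases subsingleton_or_nontrivial E with
  | inl _ => simpa [finrank_zero_of_subsingleton] using S.card_le_one_of_subsingleton
  | inr _ =>
    have h := card_mul_pow_le_of_pairwise_le_dist S v hδ hρ hS hsep
    rwa [show ρ + δ / 2 = (2 * ρ / δ + 1) * (δ / 2) by field_simp, mul_pow,
      mul_le_mul_iff_of_pos_right (by positivity)] at h

theorem card_le_five_pow_mul_of_dist_le (S : Finset E) (v : E) {d : ℝ} (hd : 0 < d) (j : ℕ)
    (hS : ∀ w ∈ S, dist w v ≤ 2 ^ (j + 1) * d)
    (hsep : (S : Set E).Pairwise fun a b => d ≤ dist a b) :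
    (#S : ℝ) ≤ 5 ^ finrank ℝ E * (2 ^ j) ^ (finrank ℝ E : ℝ) := by
  calc (#S : ℝ) ≤ (2 * (2 ^ (j + 1) * d) / d + 1) ^ finrank ℝ E :=
        card_le_of_pairwise_le_dist S v hd (by positivity) hS hsep
    _ ≤ (5 * 2 ^ j) ^ finrank ℝ E := by
        gcongr
        rw [mul_div_assoc, mul_div_cancel_right₀ _ hd.ne']
        have : (1 : ℝ) ≤ 2 ^ j := one_le_pow₀ one_le_two
        linarith [pow_succ (2 : ℝ) j]
    _ = 5 ^ finrank ℝ E * (2 ^ j) ^ (finrank ℝ E : ℝ) := by rw [mul_pow, Real.rpow_natCast]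

theorem sum_div_dist_rpow_le (S : Finset E) (v : E) {d κ : ℝ} (hd : 0 < d)
    (hκ : finrank ℝ E < κ) (hv : ∀ w ∈ S, d ≤ dist w v)
    (hsep : (S : Set E).Pairwise fun a b => d ≤ dist a b) :
    ∑ w ∈ S, (d / dist w v) ^ κ ≤ 5 ^ finrank ℝ E / (1 - 2 ^ (finrank ℝ E - κ)) := by
  set n := finrank ℝ E
  set q : ℝ := 2 ^ (n - κ)
  have hq0 : 0 ≤ q := by positivity
  have hq1 : q < 1 := Real.rpow_lt_one_of_one_lt_of_neg one_lt_two (by linarith)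
  let shell : E → ℕ := fun w => Nat.log 2 ⌊dist w v / d⌋₊
  have hshell_le : ∀ w ∈ S, 2 ^ shell w * d ≤ dist w v := fun w hw =>
    (le_div_iff₀ hd).1 (two_pow_log_floor_le ((one_le_div hd).2 (hv w hw)))
  have hshell_lt : ∀ w, dist w v < 2 ^ (shell w + 1) * d := fun w =>
    (div_lt_iff₀ hd).1 (lt_two_pow_log_floor_succ _)
  have hcard : ∀ j, (#{w ∈ S | shell w = j} : ℝ) ≤ 5 ^ n * (2 ^ j) ^ (n : ℝ) := fun j =>
    card_le_five_pow_mul_of_dist_le _ v hd j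
      (fun w hw => by
        obtain ⟨-, rfl⟩ := mem_filter.1 hw
        exact (hshell_lt w).le)
      (hsep.mono (coe_subset.2 (filter_subset _ _)))
  have hterm : ∀ j, ∀ w ∈ S, shell w = j → (d / dist w v) ^ κ ≤ (2 ^ j) ^ (-κ) := by
    rintro j w hw rfl
    rw [Real.rpow_neg (by positivity), ← Real.inv_rpow (by positivity)]
    have : 0 < dist w v := hd.trans_le (hv w hw)
    refine Real.rpow_le_rpow (by positivity) ?_ (by linarith [n.cast_nonneg (α := ℝ)])
    rw [div_le_iff₀ this, ← div_eq_inv_mul, le_div_iff₀ (by positivity), mul_comm]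
    exact hshell_le w hw
  let M := S.sup shell + 1
  calc ∑ w ∈ S, (d / dist w v) ^ κ
      = ∑ j ∈ range M, ∑ w ∈ S with shell w = j, (d / dist w v) ^ κ :=
        (sum_fiberwise_of_maps_to (fun w hw => mem_range.2 (Nat.lt_succ_of_le (le_sup hw))) _).symm
    _ ≤ ∑ j ∈ range M, 5 ^ n * q ^ j := by
        gcongr with j
        calc ∑ w ∈ S with shell w = j, (d / dist w v) ^ κ
            ≤ #{w ∈ S | shell w = j} * (2 ^ j) ^ (-κ) := by
              rw [← nsmul_eq_mul]
              exact sum_le_card_nsmul _ _ _ fun w hw =>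
                hterm j w (mem_filter.1 hw).1 (mem_filter.1 hw).2
          _ ≤ 5 ^ n * (2 ^ j) ^ (n : ℝ) * (2 ^ j) ^ (-κ) := by gcongr; exact hcard j
          _ = 5 ^ n * q ^ j := by
              rw [mul_assoc, ← Real.rpow_add (by positivity), ← sub_eq_add_neg,
                ← Real.rpow_pow_comm zero_le_two]
    _ ≤ 5 ^ n / (1 - q) := by
        rw [← mul_sum, div_eq_mul_one_div]
        gcongr
        simpa using geom_sum_Ico_le_of_lt_one (m := 0) (n := M) hq0 hq1

end Separated

theorem one_add_half_mul_le_two_rpow {t : ℝ} (ht : 0 ≤ t) : 1 + t / 2 ≤ (2 : ℝ) ^ t := by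
  rw [Real.rpow_def_of_pos two_pos]
  nlinarith [Real.add_one_le_exp (Real.log 2 * t), Real.log_two_gt_d9]

theorem sqrt_three_mul_pi_gt : 4.8 < √3 * Real.pi := by
  have h : (1.6 : ℝ) ≤ √3 := Real.le_sqrt_of_sq_le (by norm_num)
  nlinarith [Real.pi_gt_three]

theorem twenty_five_div_one_sub_two_rpow_le {κ : ℝ} (hκ : 2 < κ) :
    25 / (1 - 2 ^ (2 - κ)) ≤ 2 ^ (2 * κ + 1) * √3 * Real.pi * κ / (6 * (κ - 2)) := by
  set t := κ - 2 with ht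
  have ht0 : 0 < t := by linarith
  set u : ℝ := 2 ^ t
  have hu : 1 + t / 2 ≤ u := one_add_half_mul_le_two_rpow ht0.le
  have hinv : (2 : ℝ) ^ (2 - κ) = u⁻¹ := by rw [← Real.rpow_neg zero_le_two, ht, neg_sub]
  have hpow : (2 : ℝ) ^ (2 * κ + 1) = 32 * u ^ 2 := by
    rw [show 2 * κ + 1 = t * 2 + 5 by rw [ht]; ring, Real.rpow_add two_pos,
      Real.rpow_mul zero_le_two]
    norm_num
    ring
  have hu1 : 0 < u - 1 := by linarith
  have hu0 : 0 < u := by linarith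
  have hsub : 1 - u⁻¹ = (u - 1) / u := by field_simp
  rw [hinv, hpow, show κ = t + 2 by rw [ht]; ring, hsub, div_div_eq_mul_div,
    div_le_div_iff₀ hu1 (by positivity)]
  have hP := sqrt_three_mul_pi_gt
  calc 25 * u * (6 * t) ≤ 32 * u ^ 2 * 4.8 * 2 * (t / 2) := by
        nlinarith [mul_le_mul_of_nonneg_left (show 1 ≤ u by linarith) (by positivity : 0 ≤ u * t)]
    _ ≤ 32 * u ^ 2 * (√3 * Real.pi) * (t + 2) * (u - 1) := by gcongr <;> linarith
    _ = 32 * u ^ 2 * √3 * Real.pi * (t + 2) * (u - 1) := by ring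

open scoped Classical

theorem stmt_0 (V : Finset (EuclideanSpace ℝ (Fin 2))) (θ R κ : ℝ)
    (hθ : 0 < θ) (hR : 0 < R) (hκ : 2 < κ)
    (hsep : ∀ v ∈ V, ∀ w ∈ V, v ≠ w → θ * R ≤ dist v w) :
    ∀ v ∈ V, ∑ w ∈ V.erase v, R ^ κ / dist w v ^ κ ≤
      2 ^ (2 * κ + 1) * Real.sqrt 3 * Real.pi * κ / (6 * (κ - 2) * θ ^ κ) := by
  intro v hv
  have hd : 0 < θ * R := mul_pos hθ hR
  have hsum : ∑ w ∈ V.erase v, (θ * R / dist w v) ^ κ ≤ 25 / (1 - 2 ^ (2 - κ)) := by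
    simpa [finrank_euclideanSpace_fin, show (5 : ℝ) ^ 2 = 25 by norm_num] using
      sum_div_dist_rpow_le (V.erase v) v hd
        (by rw [finrank_euclideanSpace_fin]; exact_mod_cast hκ)
        (fun w hw => hsep w (mem_of_mem_erase hw) v hv (ne_of_mem_erase hw))
        (fun w hw u hu hwu => hsep w (mem_of_mem_erase hw) u (mem_of_mem_erase hu) hwu)
  have hterm : ∀ w ∈ V.erase v, R ^ κ / dist w v ^ κ = (θ * R / dist w v) ^ κ / θ ^ κ := by
    intro w _
    rw [Real.div_rpow hd.le dist_nonneg, Real.mul_rpow hθ.le hR.le]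
    field_simp
  rw [sum_congr rfl hterm, ← sum_div, ← div_div, div_le_div_iff_of_pos_right (by positivity)]
  exact hsum.trans (twenty_five_div_one_sub_two_rpow_le hκ)
end

section
/- Let L* = {l_1,…,l_n} be a φ-separation set of links such that for any two distinct links the senders are at distance at least α times the sum of the two link lengths, α > 1. Then for any indices i, k with max{i,k} < n: Σ_{j=max{i,k}}^{n} [d(s_j,t_j)^κ · d(s_k,t_i)^κ] / [d(s_k,t_j)^κ · d(s_j,t_i)^κ] ≤ ((2α−1)/(α−1))^κ · φ. -/
open scoped Classical

theorem stmt_9 (n : ℕ) (s t : Fin n → EuclideanSpace ℝ (Fin 2))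
    (R κ φ α : ℝ) (hκ : 2 < κ) (hα : 1 < α)
    (hinj : Function.Injective (Sum.elim s t))
    (hlen : ∀ i, 0 < dist (s i) (t i) ∧ dist (s i) (t i) ≤ R)
    (hsendersep : ∀ i j, i ≠ j →
      α * (dist (s i) (t i) + dist (s j) (t j)) ≤ dist (s i) (s j))
    (hsep : ∀ v ∈ Finset.univ.image s ∪ Finset.univ.image t,
      ∑ w ∈ Finset.univ.image s ∪ Finset.univ.image t, R ^ κ / dist w v ^ κ ≤ φ) :
    ∀ i k : Fin n,
      ∑ j ∈ Finset.univ.filter (fun j => max i k ≤ j),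
        (dist (s j) (t j) ^ κ * dist (s k) (t i) ^ κ) /
          (dist (s k) (t j) ^ κ * dist (s j) (t i) ^ κ) ≤
        ((2 * α - 1) / (α - 1)) ^ κ * φ := by
  intro i k
  have hα0 : (0:ℝ) < α - 1 := by linarith
  have hκ0 : (0:ℝ) < κ := by linarith
  have hκ1 : (1:ℝ) ≤ κ := by linarith
  have hs : Function.Injective s := fun a b h => by
    have := hinj (show Sum.elim s t (Sum.inl a) = Sum.elim s t (Sum.inl b) from h)
    simpa using this
  have ht : Function.Injective t := fun a b h => by
    have := hinj (show Sum.elim s t (Sum.inr a) = Sum.elim s t (Sum.inr b) from h)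
    simpa using this
  have hst : ∀ a b, s a ≠ t b := fun a b h => by
    have := hinj (show Sum.elim s t (Sum.inl a) = Sum.elim s t (Sum.inr b) from h)
    simp at this
  have hR : 0 < R := (hlen i).1.trans_le (hlen i).2
  have dposd : ∀ j, 0 < dist (s j) (t i) := fun j => dist_pos.2 (hst j i)
  have dposc : ∀ j, 0 < dist (s k) (t j) := fun j => dist_pos.2 (hst k j)
  set N := Finset.univ.image s ∪ Finset.univ.image t with hN
  set F := Finset.univ.filter (fun j => max i k ≤ j) with hF
  have hterm : ∀ w v : EuclideanSpace ℝ (Fin 2), 0 ≤ R ^ κ / dist w v ^ κ := fun w v =>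
    div_nonneg (Real.rpow_nonneg hR.le κ) (Real.rpow_nonneg dist_nonneg κ)
  have hti : t i ∈ N := Finset.mem_union.2 (Or.inr (Finset.mem_image_of_mem t (Finset.mem_univ i)))
  have hsk : s k ∈ N := Finset.mem_union.2 (Or.inl (Finset.mem_image_of_mem s (Finset.mem_univ k)))
  have hφ : 0 ≤ φ :=
    le_trans (Finset.sum_nonneg fun w _ => hterm w (t i)) (hsep (t i) hti)
  set c1 := α / (α - 1) with hc1
  have hc1nn : 0 ≤ c1 := by positivity
  -- sub-sum bounds
  have key1 : ∑ j ∈ F, R ^ κ / dist (s j) (t i) ^ κ ≤ φ := by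
    have h1 : ∑ j ∈ F, R ^ κ / dist (s j) (t i) ^ κ
        = ∑ w ∈ F.image s, R ^ κ / dist w (t i) ^ κ :=
      (Finset.sum_image (f := fun w => R ^ κ / dist w (t i) ^ κ) (fun a _ b _ h => hs h)).symm
    rw [h1]
    refine le_trans (Finset.sum_le_sum_of_subset_of_nonneg ?_ fun w _ _ => hterm w (t i))
      (hsep (t i) hti)
    intro w hw
    rcases Finset.mem_image.1 hw with ⟨j, _, rfl⟩
    exact Finset.mem_union.2 (Or.inl (Finset.mem_image_of_mem s (Finset.mem_univ j)))
  have key2 : ∑ j ∈ F, R ^ κ / dist (s k) (t j) ^ κ ≤ φ := by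
    have h0 : ∑ j ∈ F, R ^ κ / dist (s k) (t j) ^ κ
        = ∑ j ∈ F, R ^ κ / dist (t j) (s k) ^ κ := by
      simp [dist_comm]
    have h1 : ∑ j ∈ F, R ^ κ / dist (t j) (s k) ^ κ
        = ∑ w ∈ F.image t, R ^ κ / dist w (s k) ^ κ :=
      (Finset.sum_image (f := fun w => R ^ κ / dist w (s k) ^ κ) (fun a _ b _ h => ht h)).symm
    rw [h0, h1]
    refine le_trans (Finset.sum_le_sum_of_subset_of_nonneg ?_ fun w _ _ => hterm w (s k))
      (hsep (s k) hsk)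
    intro w hw
    rcases Finset.mem_image.1 hw with ⟨j, _, rfl⟩
    exact Finset.mem_union.2 (Or.inr (Finset.mem_image_of_mem t (Finset.mem_univ j)))
  -- per-term bound
  have hpt : ∀ j ∈ F,
      (dist (s j) (t j) ^ κ * dist (s k) (t i) ^ κ) /
        (dist (s k) (t j) ^ κ * dist (s j) (t i) ^ κ) ≤
      (c1 * (R / dist (s j) (t i)) + R / dist (s k) (t j)) ^ κ := by
    intro j _
    set a := dist (s j) (t j) with ha'
    set b := dist (s k) (t i) with hb'
    set c := dist (s k) (t j) with hc'
    set d := dist (s j) (t i) with hd'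
    have hap : 0 < a := (hlen j).1
    have haR : a ≤ R := (hlen j).2
    have hbp : 0 ≤ b := dist_nonneg
    have hcp : 0 < c := dposc j
    have hdp : 0 < d := dposd j
    -- main arithmetic inequality
    have hab : a * b ≤ c1 * R * c + R * d := by
      have hne : α - 1 ≠ 0 := hα0.ne'
      have hrw : c1 * R * c + R * d = (α * R * c + (α - 1) * R * d) / (α - 1) := by
        rw [hc1]
        field_simp
      rw [hrw, le_div_iff₀ hα0]
      by_cases hjk : j = k
      · subst hjk
        have hcb : c = a := by rw [hc', ha']
        have hdb : d = b := by rw [hd', hb']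
        rw [hcb, hdb]
        nlinarith [mul_le_mul_of_nonneg_right haR hbp, mul_pos hR hap]
      · have htri : b ≤ c + a + d := by
          calc b ≤ dist (s k) (t j) + dist (t j) (s j) + dist (s j) (t i) :=
                dist_triangle4 (s k) (t j) (s j) (t i)
            _ = c + a + d := by rw [dist_comm (t j) (s j)]
        have hca : (α - 1) * a ≤ c := by
          have h1 := hsendersep k j (fun h => hjk h.symm)
          have h2 : dist (s k) (s j) ≤ c + a := by
            calc dist (s k) (s j) ≤ dist (s k) (t j) + dist (t j) (s j) :=
                  dist_triangle (s k) (t j) (s j)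
              _ = c + a := by rw [dist_comm (t j) (s j)]
          have hk0 : 0 < dist (s k) (t k) := (hlen k).1
          nlinarith
        nlinarith [mul_le_mul_of_nonneg_left htri hap.le,
          mul_le_mul_of_nonneg_right hca hap.le,
          mul_le_mul_of_nonneg_left haR hcp.le,
          mul_le_mul_of_nonneg_right (mul_le_mul_of_nonneg_left haR hcp.le) hα0.le,
          mul_le_mul_of_nonneg_right (mul_le_mul_of_nonneg_left haR hdp.le) hα0.le]
    have hlhs : (a ^ κ * b ^ κ) / (c ^ κ * d ^ κ) = (a * b / (c * d)) ^ κ := by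
      rw [Real.div_rpow (mul_nonneg hap.le hbp) (mul_nonneg hcp.le hdp.le),
        Real.mul_rpow hap.le hbp, Real.mul_rpow hcp.le hdp.le]
    rw [hlhs]
    refine Real.rpow_le_rpow (by positivity) ?_ hκ0.le
    rw [div_le_iff₀ (by positivity)]
    have hexp : (c1 * (R / d) + R / c) * (c * d) = c1 * R * c + R * d := by
      have hcne : c ≠ 0 := hcp.ne'
      have hdne : d ≠ 0 := hdp.ne'
      have hne : α - 1 ≠ 0 := hα0.ne'
      rw [hc1]
      field_simp
    rw [hexp]
    exact hab
  -- sum comparison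
  have step1 : ∑ j ∈ F,
      (dist (s j) (t j) ^ κ * dist (s k) (t i) ^ κ) /
        (dist (s k) (t j) ^ κ * dist (s j) (t i) ^ κ) ≤
      ∑ j ∈ F, (c1 * (R / dist (s j) (t i)) + R / dist (s k) (t j)) ^ κ :=
    Finset.sum_le_sum hpt
  set f : Fin n → ℝ := fun j => c1 * (R / dist (s j) (t i)) with hf
  set g : Fin n → ℝ := fun j => R / dist (s k) (t j) with hg
  have hf0 : ∀ j ∈ F, 0 ≤ f j := fun j _ => by
    have := dposd j; positivity
  have hg0 : ∀ j ∈ F, 0 ≤ g j := fun j _ => by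
    have := dposc j; positivity
  have hsumf : ∑ j ∈ F, f j ^ κ ≤ c1 ^ κ * φ := by
    have heq : ∀ j ∈ F, f j ^ κ = c1 ^ κ * (R ^ κ / dist (s j) (t i) ^ κ) := by
      intro j _
      rw [hf]
      rw [Real.mul_rpow hc1nn (div_nonneg hR.le dist_nonneg),
        Real.div_rpow hR.le dist_nonneg]
    rw [Finset.sum_congr rfl heq, ← Finset.mul_sum]
    exact mul_le_mul_of_nonneg_left key1 (Real.rpow_nonneg hc1nn κ)
  have hsumg : ∑ j ∈ F, g j ^ κ ≤ φ := by
    have heq : ∀ j ∈ F, g j ^ κ = R ^ κ / dist (s k) (t j) ^ κ := by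
      intro j _
      rw [hg]
      rw [Real.div_rpow hR.le dist_nonneg]
    rw [Finset.sum_congr rfl heq]
    exact key2
  have hT0 : 0 ≤ ∑ j ∈ F, (f j + g j) ^ κ :=
    Finset.sum_nonneg fun j hj => Real.rpow_nonneg (add_nonneg (hf0 j hj) (hg0 j hj)) κ
  have mink : (∑ j ∈ F, (f j + g j) ^ κ) ^ (1 / κ) ≤
      (∑ j ∈ F, f j ^ κ) ^ (1 / κ) + (∑ j ∈ F, g j ^ κ) ^ (1 / κ) :=
    Real.Lp_add_le_of_nonneg F hκ1 hf0 hg0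
  have hfκ0 : 0 ≤ ∑ j ∈ F, f j ^ κ :=
    Finset.sum_nonneg fun j hj => Real.rpow_nonneg (hf0 j hj) κ
  have hgκ0 : 0 ≤ ∑ j ∈ F, g j ^ κ :=
    Finset.sum_nonneg fun j hj => Real.rpow_nonneg (hg0 j hj) κ
  have hstep2 : (∑ j ∈ F, (f j + g j) ^ κ) ^ (1 / κ) ≤ (c1 + 1) * φ ^ (1 / κ) := by
    have h1 : (∑ j ∈ F, f j ^ κ) ^ (1 / κ) ≤ c1 * φ ^ (1 / κ) := by
      calc (∑ j ∈ F, f j ^ κ) ^ (1 / κ) ≤ (c1 ^ κ * φ) ^ (1 / κ) :=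
            Real.rpow_le_rpow hfκ0 hsumf (by positivity)
        _ = c1 * φ ^ (1 / κ) := by
            rw [Real.mul_rpow (Real.rpow_nonneg hc1nn κ) hφ, ← Real.rpow_mul hc1nn,
              mul_one_div_cancel hκ0.ne', Real.rpow_one]
    have h2 : (∑ j ∈ F, g j ^ κ) ^ (1 / κ) ≤ φ ^ (1 / κ) :=
      Real.rpow_le_rpow hgκ0 hsumg (by positivity)
    calc (∑ j ∈ F, (f j + g j) ^ κ) ^ (1 / κ)
        ≤ (∑ j ∈ F, f j ^ κ) ^ (1 / κ) + (∑ j ∈ F, g j ^ κ) ^ (1 / κ) := mink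
      _ ≤ c1 * φ ^ (1 / κ) + φ ^ (1 / κ) := add_le_add h1 h2
      _ = (c1 + 1) * φ ^ (1 / κ) := by ring
  have hfinal : ∑ j ∈ F, (f j + g j) ^ κ ≤ ((2 * α - 1) / (α - 1)) ^ κ * φ := by
    have h3 : ((∑ j ∈ F, (f j + g j) ^ κ) ^ (1 / κ)) ^ κ ≤ ((c1 + 1) * φ ^ (1 / κ)) ^ κ :=
      Real.rpow_le_rpow (Real.rpow_nonneg hT0 _) hstep2 hκ0.le
    have h4 : ((∑ j ∈ F, (f j + g j) ^ κ) ^ (1 / κ)) ^ κ = ∑ j ∈ F, (f j + g j) ^ κ := by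
      rw [← Real.rpow_mul hT0, one_div_mul_cancel hκ0.ne', Real.rpow_one]
    have h5 : ((c1 + 1) * φ ^ (1 / κ)) ^ κ = (c1 + 1) ^ κ * φ := by
      rw [Real.mul_rpow (by positivity) (Real.rpow_nonneg hφ _), ← Real.rpow_mul hφ,
        one_div_mul_cancel hκ0.ne', Real.rpow_one]
    have hc1eq : c1 + 1 = (2 * α - 1) / (α - 1) := by
      have hne : α - 1 ≠ 0 := hα0.ne'
      rw [hc1]
      field_simp
      ring
    rw [h4, h5, hc1eq] at h3
    exact h3
  have step1' : ∑ j ∈ F,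
      (dist (s j) (t j) ^ κ * dist (s k) (t i) ^ κ) /
        (dist (s k) (t j) ^ κ * dist (s j) (t i) ^ κ) ≤
      ∑ j ∈ F, (f j + g j) ^ κ := step1
  exact step1'.trans hfinal
end

section
/- Let L* = {l_1,…,l_n} be a φ-separation set of links satisfying: (1) for any two distinct links l_i, l_j, the senders satisfy d(s_i,s_j) ≥ α(d(s_i,t_i)+d(s_j,t_j)) with α > 1; (2) φ ≤ 1/(4β^κ σ(σ+1)) where β = (2α−1)/(α−1). Define powers iteratively by p(l_1) = m σξ d(s_1,t_1)^κ/η and p(l_i) = m σ d(s_i,t_i)^κ (Σ_{j<i} p(l_j)/d(s_j,t_i)^κ + ξ/η). If m ∈ [(1−√(1−4β^κ φσ(σ+1)))/(2β^κ φσ(σ+1)), (1+√(1−4β^κ φσ(σ+1)))/(2β^κ φσ(σ+1))], then every link satisfies the SINR constraint: for each i, p(l_i)·d(s_i,t_i)^{−κ} ≥ σ(ξ/η + Σ_{j≠i} p(l_j)/d(s_j,t_i)^κ). -/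
open scoped Classical

set_option maxHeartbeats 1000000 in
theorem stmt_11 (n : ℕ) (s t : Fin n → EuclideanSpace ℝ (Fin 2)) (p : Fin n → ℝ)
    (R κ φ α σ ξ η m : ℝ) (hκ : 2 < κ) (hα : 1 < α) (hσ : 0 < σ) (hξ : 0 < ξ)
    (hη : 0 < η) (hφ : 0 < φ)
    (hinj : Function.Injective (Sum.elim s t))
    (hlen : ∀ i, 0 < dist (s i) (t i) ∧ dist (s i) (t i) ≤ R)
    (hsendersep : ∀ i j, i ≠ j →
      α * (dist (s i) (t i) + dist (s j) (t j)) ≤ dist (s i) (s j))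
    (hsep : ∀ v ∈ Finset.univ.image s ∪ Finset.univ.image t,
      ∑ w ∈ Finset.univ.image s ∪ Finset.univ.image t, R ^ κ / dist w v ^ κ ≤ φ)
    (hφ' : φ ≤ 1 / (4 * ((2 * α - 1) / (α - 1)) ^ κ * σ * (σ + 1)))
    (hm : m ∈ Set.Icc
      ((1 - Real.sqrt (1 - 4 * ((2 * α - 1) / (α - 1)) ^ κ * φ * σ * (σ + 1))) /
        (2 * ((2 * α - 1) / (α - 1)) ^ κ * φ * σ * (σ + 1)))
      ((1 + Real.sqrt (1 - 4 * ((2 * α - 1) / (α - 1)) ^ κ * φ * σ * (σ + 1))) /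
        (2 * ((2 * α - 1) / (α - 1)) ^ κ * φ * σ * (σ + 1))))
    (hp : ∀ i : Fin n, p i = m * σ * dist (s i) (t i) ^ κ *
      ((∑ j ∈ Finset.univ.filter (fun j => j < i), p j / dist (s j) (t i) ^ κ) + ξ / η)) :
    ∀ i : Fin n,
      σ * (ξ / η + ∑ j ∈ Finset.univ.filter (fun j => j ≠ i), p j / dist (s j) (t i) ^ κ)
        ≤ p i / dist (s i) (t i) ^ κ := by
  intro i₀
  have hR : 0 < R := lt_of_lt_of_le (hlen i₀).1 (hlen i₀).2
  set β : ℝ := (2 * α - 1) / (α - 1) with hβdef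
  have hβ : 1 < β := by
    rw [hβdef, lt_div_iff₀ (by linarith)]; linarith
  have hβκ : 1 ≤ β ^ κ := Real.one_le_rpow hβ.le (by linarith)
  have hκ0 : (0:ℝ) ≤ κ := by linarith
  set c : ℝ := β ^ κ * φ * σ * (σ + 1) with hcdef
  have hc : 0 < c := by
    have : (0:ℝ) < β ^ κ := by linarith
    positivity
  -- the quadratic inequality on m
  have h4c : 4 * c ≤ 1 := by
    rw [le_div_iff₀ (by nlinarith)] at hφ'
    nlinarith
  have hD : (0:ℝ) ≤ 1 - 4 * β ^ κ * φ * σ * (σ + 1) := by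
    have : 1 - 4 * β ^ κ * φ * σ * (σ + 1) = 1 - 4 * c := by rw [hcdef]; ring
    rw [this]; linarith
  have hsq : Real.sqrt (1 - 4 * β ^ κ * φ * σ * (σ + 1)) ^ 2
      = 1 - 4 * c := by rw [Real.sq_sqrt hD, hcdef]; ring
  obtain ⟨hmlo, hmhi⟩ := hm
  have hden : (0:ℝ) < 2 * β ^ κ * φ * σ * (σ + 1) := by nlinarith
  rw [div_le_iff₀ hden] at hmlo
  rw [le_div_iff₀ hden] at hmhi
  set D : ℝ := Real.sqrt (1 - 4 * β ^ κ * φ * σ * (σ + 1)) with hDdef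
  have h1 : 1 - D ≤ 2 * c * m := by nlinarith
  have h2 : 2 * c * m ≤ 1 + D := by nlinarith
  have hquad : c * m ^ 2 - m + 1 ≤ 0 := by nlinarith [sq_nonneg (2 * c * m - 1)]
  have hm1 : 1 ≤ m := by nlinarith [sq_nonneg m]
  have hcσφ : σ * φ ≤ c := by
    rw [hcdef]
    nlinarith [mul_le_mul_of_nonneg_right hβκ (by positivity : (0:ℝ) ≤ φ * σ * (σ + 1)),
      mul_nonneg (mul_nonneg hσ.le hσ.le) hφ.le]
  have hq2 : σ * φ * m ^ 2 + 1 ≤ m := by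
    nlinarith [mul_le_mul_of_nonneg_right hcσφ (sq_nonneg m)]
  -- geometry
  have hs_inj : Function.Injective s := fun a b h => by
    have := hinj (a₁ := Sum.inl a) (a₂ := Sum.inl b) (by simpa using h)
    simpa using this
  have hst : ∀ j i : Fin n, s j ≠ t i := fun j i h => by
    have := hinj (a₁ := Sum.inl j) (a₂ := Sum.inr i) (by simpa using h)
    simp at this
  have hξη : (0:ℝ) < ξ / η := by positivity
  -- per-node separation bound for any index set
  have hsepT : ∀ (T : Finset (Fin n)) (i : Fin n),
      ∑ j ∈ T, R ^ κ / dist (s j) (t i) ^ κ ≤ φ := by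
    intro T i
    have hsub : T.image s ⊆ Finset.univ.image s ∪ Finset.univ.image t := by
      intro w hw
      simp only [Finset.mem_image, Finset.mem_union, Finset.mem_univ] at hw ⊢
      obtain ⟨j, _, rfl⟩ := hw
      exact Or.inl ⟨j, trivial, rfl⟩
    calc ∑ j ∈ T, R ^ κ / dist (s j) (t i) ^ κ
        = ∑ w ∈ T.image s, R ^ κ / dist w (t i) ^ κ :=
          (Finset.sum_image (f := fun w => R ^ κ / dist w (t i) ^ κ)
            (fun a _ b _ h => hs_inj h)).symm
      _ ≤ ∑ w ∈ Finset.univ.image s ∪ Finset.univ.image t, R ^ κ / dist w (t i) ^ κ := by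
          apply Finset.sum_le_sum_of_subset_of_nonneg hsub
          intro w _ _; positivity
      _ ≤ φ := hsep _ (by
          simp only [Finset.mem_union, Finset.mem_image, Finset.mem_univ]
          exact Or.inr ⟨i, trivial, rfl⟩)
  set A : ℝ := (m - 1) * ξ / (η * φ) with hAdef
  have hA0 : 0 ≤ A := by
    apply div_nonneg (mul_nonneg (by linarith) hξ.le) (by positivity)
  have hAφ : A * φ = (m - 1) * (ξ / η) := by
    rw [hAdef]; field_simp
  have hkey : m * σ * (A * φ + ξ / η) ≤ A := by
    have e1 : m * σ * (A * φ + ξ / η) = m ^ 2 * σ * (ξ / η) := by rw [hAφ]; ring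
    have e2 : A = ((m - 1) / φ) * (ξ / η) := by rw [hAdef, div_mul_div_comm, mul_comm η φ]
    rw [e1, e2]
    apply mul_le_mul_of_nonneg_right _ hξη.le
    rw [le_div_iff₀ hφ]
    nlinarith
  -- power bounds by strong induction
  have hbnd : ∀ k : ℕ, ∀ i : Fin n, (i : ℕ) < k → 0 ≤ p i ∧ p i ≤ A * R ^ κ := by
    intro k
    induction k with
    | zero => intro i h; exact absurd h (Nat.not_lt_zero _)
    | succ k ih =>
      intro i hik
      have hsum0 : 0 ≤ ∑ j ∈ Finset.univ.filter (fun j => j < i),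
          p j / dist (s j) (t i) ^ κ := by
        apply Finset.sum_nonneg
        intro j hj
        have hji : j < i := (Finset.mem_filter.1 hj).2
        have hj0 : 0 ≤ p j := (ih j (lt_of_lt_of_le hji (Nat.lt_succ_iff.1 hik))).1
        exact div_nonneg hj0 (Real.rpow_nonneg dist_nonneg κ)
      have hdi : 0 < dist (s i) (t i) := (hlen i).1
      constructor
      · rw [hp i]
        have h1 : (0:ℝ) ≤ m * σ := by positivity
        have h2 : (0:ℝ) ≤ dist (s i) (t i) ^ κ := Real.rpow_nonneg dist_nonneg κ
        have h3 : (0:ℝ) ≤ (∑ j ∈ Finset.univ.filter (fun j => j < i),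
            p j / dist (s j) (t i) ^ κ) + ξ / η := by linarith
        exact mul_nonneg (mul_nonneg h1 h2) h3
      · rw [hp i]
        have hsumA : ∑ j ∈ Finset.univ.filter (fun j => j < i),
            p j / dist (s j) (t i) ^ κ ≤ A * φ := by
          calc ∑ j ∈ Finset.univ.filter (fun j => j < i), p j / dist (s j) (t i) ^ κ
              ≤ ∑ j ∈ Finset.univ.filter (fun j => j < i),
                A * (R ^ κ / dist (s j) (t i) ^ κ) := by
                apply Finset.sum_le_sum
                intro j hj
                have hji : j < i := (Finset.mem_filter.1 hj).2
                have hjA : p j ≤ A * R ^ κ :=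
                  (ih j (lt_of_lt_of_le hji (Nat.lt_succ_iff.1 hik))).2
                have hd : 0 < dist (s j) (t i) ^ κ :=
                  Real.rpow_pos_of_pos (dist_pos.2 (hst j i)) κ
                rw [mul_div_assoc']
                exact div_le_div_of_nonneg_right hjA hd.le
            _ = A * ∑ j ∈ Finset.univ.filter (fun j => j < i),
                R ^ κ / dist (s j) (t i) ^ κ := (Finset.mul_sum _ _ _).symm
            _ ≤ A * φ := mul_le_mul_of_nonneg_left (hsepT _ i) hA0
        have h2 : (0:ℝ) ≤ dist (s i) (t i) ^ κ := Real.rpow_nonneg dist_nonneg κ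
        have hdR : dist (s i) (t i) ^ κ ≤ R ^ κ :=
          Real.rpow_le_rpow dist_nonneg (hlen i).2 hκ0
        calc m * σ * dist (s i) (t i) ^ κ *
              ((∑ j ∈ Finset.univ.filter (fun j => j < i), p j / dist (s j) (t i) ^ κ) + ξ / η)
            ≤ m * σ * dist (s i) (t i) ^ κ * (A * φ + ξ / η) := by
              apply mul_le_mul_of_nonneg_left (by linarith) (by positivity)
          _ = m * σ * (A * φ + ξ / η) * dist (s i) (t i) ^ κ := by ring
          _ ≤ A * dist (s i) (t i) ^ κ := mul_le_mul_of_nonneg_right hkey h2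
          _ ≤ A * R ^ κ := mul_le_mul_of_nonneg_left hdR hA0
  have hp0 : ∀ i : Fin n, 0 ≤ p i := fun i => (hbnd n i i.isLt).1
  have hpA : ∀ i : Fin n, p i ≤ A * R ^ κ := fun i => (hbnd n i i.isLt).2
  -- main argument
  set i := i₀
  have hdiκ : 0 < dist (s i) (t i) ^ κ := Real.rpow_pos_of_pos (hlen i).1 κ
  have hsplit : Finset.univ.filter (fun j => j ≠ i)
      = Finset.univ.filter (fun j => j < i) ∪ Finset.univ.filter (fun j => i < j) := by
    ext j
    simp only [Finset.mem_filter, Finset.mem_union, Finset.mem_univ, true_and]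
    exact ne_iff_lt_or_gt
  have hdisj : Disjoint (Finset.univ.filter (fun j => j < i))
      (Finset.univ.filter (fun j => i < j)) := by
    rw [Finset.disjoint_left]
    intro j h1 h2
    have := (Finset.mem_filter.1 h1).2
    have := (Finset.mem_filter.1 h2).2
    omega
  have hgt : ∑ j ∈ Finset.univ.filter (fun j => i < j), p j / dist (s j) (t i) ^ κ
      ≤ A * φ := by
    calc ∑ j ∈ Finset.univ.filter (fun j => i < j), p j / dist (s j) (t i) ^ κ
        ≤ ∑ j ∈ Finset.univ.filter (fun j => i < j), A * (R ^ κ / dist (s j) (t i) ^ κ) := by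
          apply Finset.sum_le_sum
          intro j hj
          have hd : 0 < dist (s j) (t i) ^ κ :=
            Real.rpow_pos_of_pos (dist_pos.2 (hst j i)) κ
          rw [mul_div_assoc']
          exact div_le_div_of_nonneg_right (hpA j) hd.le
      _ = A * ∑ j ∈ Finset.univ.filter (fun j => i < j), R ^ κ / dist (s j) (t i) ^ κ :=
          (Finset.mul_sum _ _ _).symm
      _ ≤ A * φ := mul_le_mul_of_nonneg_left (hsepT _ i) hA0
  have hlt0 : 0 ≤ ∑ j ∈ Finset.univ.filter (fun j => j < i), p j / dist (s j) (t i) ^ κ := by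
    apply Finset.sum_nonneg
    intro j _
    exact div_nonneg (hp0 j) (Real.rpow_nonneg dist_nonneg κ)
  have hpdiv : p i / dist (s i) (t i) ^ κ = m * σ *
      ((∑ j ∈ Finset.univ.filter (fun j => j < i), p j / dist (s j) (t i) ^ κ) + ξ / η) := by
    rw [hp i]
    field_simp
  rw [hpdiv, hsplit, Finset.sum_union hdisj]
  rw [hAφ] at hgt
  nlinarith [hgt, hlt0, hξη, hσ, hm1,
    mul_le_mul_of_nonneg_left hgt hσ.le,
    mul_le_mul_of_nonneg_left hlt0 (mul_nonneg (by linarith : (0:ℝ) ≤ m - 1) hσ.le)]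
end

section
/- Under the iterative power assignment on a φ-separation set satisfying the sufficient conditions of the feasibility lemma (with mσφ < 1), every assigned power is bounded above by P_max^{up} = mσξR^κ / ((1 − mσφ)η). -/
open scoped Classical

theorem stmt_12 (n : ℕ) (s t : Fin n → EuclideanSpace ℝ (Fin 2)) (p : Fin n → ℝ)
    (R κ φ α σ ξ η m : ℝ) (hκ : 2 < κ) (hα : 1 < α) (hσ : 0 < σ) (hξ : 0 < ξ)
    (hη : 0 < η) (hφ : 0 < φ) (hm1 : 1 < m) (hmσφ : m * σ * φ < 1)
    (hinj : Function.Injective (Sum.elim s t))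
    (hlen : ∀ i, 0 < dist (s i) (t i) ∧ dist (s i) (t i) ≤ R)
    (hsendersep : ∀ i j, i ≠ j →
      α * (dist (s i) (t i) + dist (s j) (t j)) ≤ dist (s i) (s j))
    (hsep : ∀ v ∈ Finset.univ.image s ∪ Finset.univ.image t,
      ∑ w ∈ Finset.univ.image s ∪ Finset.univ.image t, R ^ κ / dist w v ^ κ ≤ φ)
    (hp : ∀ i : Fin n, p i = m * σ * dist (s i) (t i) ^ κ *
      ((∑ j ∈ Finset.univ.filter (fun j => j < i), p j / dist (s j) (t i) ^ κ) + ξ / η)) :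
    ∀ i : Fin n, p i ≤ m * σ * ξ * R ^ κ / ((1 - m * σ * φ) * η) := by
  by_cases hn : n = 0
  · subst hn; exact fun i => absurd i.2 (by omega)
  have hm0 : (0:ℝ) < m := by linarith
  have hκ0 : (0:ℝ) < κ := by linarith
  have h1 : (0:ℝ) < 1 - m * σ * φ := by linarith
  obtain ⟨i0⟩ : Nonempty (Fin n) := ⟨⟨0, Nat.pos_of_ne_zero hn⟩⟩
  have hR : 0 < R := lt_of_lt_of_le (hlen i0).1 (hlen i0).2
  have hRκ : 0 < R ^ κ := Real.rpow_pos_of_pos hR κ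
  set P := m * σ * ξ * R ^ κ / ((1 - m * σ * φ) * η) with hPdef
  have hPpos : 0 < P := div_pos (by positivity) (by positivity)
  have hs_inj : Function.Injective s := fun a b h => by
    have : Sum.elim s t (Sum.inl a) = Sum.elim s t (Sum.inl b) := by simpa using h
    simpa using hinj this
  have hst : ∀ a b : Fin n, s a ≠ t b := fun a b h => by
    have : Sum.elim s t (Sum.inl a) = Sum.elim s t (Sum.inr b) := by simpa using h
    exact absurd (hinj this) (by simp)
  have key : ∀ k : ℕ, ∀ i : Fin n, i.1 < k → 0 ≤ p i ∧ p i ≤ P := by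
    intro k
    induction k with
    | zero => intro i h; omega
    | succ k ih =>
      intro i hi
      have IH : ∀ j : Fin n, j < i → 0 ≤ p j ∧ p j ≤ P := fun j hj =>
        ih j (by omega)
      have hdpos : ∀ j : Fin n, (0:ℝ) < dist (s j) (t i) ^ κ := fun j =>
        Real.rpow_pos_of_pos (dist_pos.mpr (hst j i)) κ
      constructor
      · rw [hp i]
        have h1 : 0 ≤ ∑ j ∈ Finset.univ.filter (fun j => j < i),
            p j / dist (s j) (t i) ^ κ := by
          apply Finset.sum_nonneg
          intro j hj
          exact div_nonneg (IH j (Finset.mem_filter.mp hj).2).1 (hdpos j).le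
        have h2 : 0 ≤ ξ / η := by positivity
        have h3 : 0 ≤ m * σ * dist (s i) (t i) ^ κ := by
          have := (hlen i).1; positivity
        nlinarith
      · -- bound the interference sum
        have step1 : ∑ j ∈ Finset.univ.filter (fun j => j < i),
            p j / dist (s j) (t i) ^ κ ≤
            ∑ j ∈ Finset.univ.filter (fun j => j < i),
            P / dist (s j) (t i) ^ κ := by
          apply Finset.sum_le_sum
          intro j hj
          have hd := (hdpos j).le
          gcongr
          exact (IH j (Finset.mem_filter.mp hj).2).2
        have step2 : ∑ j ∈ Finset.univ.filter (fun j => j < i),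
            P / dist (s j) (t i) ^ κ =
            ∑ w ∈ (Finset.univ.filter (fun j => j < i)).image s,
            P / dist w (t i) ^ κ := by
          rw [Finset.sum_image (fun a _ b _ h => hs_inj h)]
        have step3 : ∀ w : EuclideanSpace ℝ (Fin 2),
            P / dist w (t i) ^ κ = (P / R ^ κ) * (R ^ κ / dist w (t i) ^ κ) := by
          intro w
          rw [div_mul_div_comm, mul_comm P (R ^ κ), mul_div_mul_left _ _ hRκ.ne']
        have step4 : ∑ w ∈ (Finset.univ.filter (fun j => j < i)).image s,
            R ^ κ / dist w (t i) ^ κ ≤ φ := by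
          refine le_trans (Finset.sum_le_sum_of_subset_of_nonneg ?_ ?_)
            (hsep (t i) ?_)
          · exact le_trans (Finset.image_subset_image (Finset.subset_univ _))
              Finset.subset_union_left
          · intro w _ _
            have : (0:ℝ) ≤ dist w (t i) ^ κ := Real.rpow_nonneg dist_nonneg κ
            positivity
          · exact Finset.mem_union_right _ (Finset.mem_image_of_mem t (Finset.mem_univ i))
        have hsum : ∑ j ∈ Finset.univ.filter (fun j => j < i),
            p j / dist (s j) (t i) ^ κ ≤ P / R ^ κ * φ := by
          calc ∑ j ∈ Finset.univ.filter (fun j => j < i), p j / dist (s j) (t i) ^ κ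
              ≤ ∑ w ∈ (Finset.univ.filter (fun j => j < i)).image s,
                  P / dist w (t i) ^ κ := step1.trans_eq step2
            _ = (P / R ^ κ) * ∑ w ∈ (Finset.univ.filter (fun j => j < i)).image s,
                  R ^ κ / dist w (t i) ^ κ := by
                rw [Finset.mul_sum]; exact Finset.sum_congr rfl (fun w _ => step3 w)
            _ ≤ P / R ^ κ * φ := by
                exact mul_le_mul_of_nonneg_left step4 (by positivity)
        rw [hp i]
        have hdi : dist (s i) (t i) ^ κ ≤ R ^ κ :=
          Real.rpow_le_rpow dist_nonneg (hlen i).2 hκ0.le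
        have hA : m * σ * dist (s i) (t i) ^ κ ≤ m * σ * R ^ κ :=
          mul_le_mul_of_nonneg_left hdi (by positivity)
        have hB : (0:ℝ) ≤ ∑ j ∈ Finset.univ.filter (fun j => j < i),
            p j / dist (s j) (t i) ^ κ + ξ / η := by
          have : 0 ≤ ∑ j ∈ Finset.univ.filter (fun j => j < i),
              p j / dist (s j) (t i) ^ κ := Finset.sum_nonneg fun j hj =>
            div_nonneg (IH j (Finset.mem_filter.mp hj).2).1 (hdpos j).le
          positivity
        have hAnn : (0:ℝ) ≤ m * σ * dist (s i) (t i) ^ κ := by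
          have := (hlen i).1; positivity
        calc m * σ * dist (s i) (t i) ^ κ *
              ((∑ j ∈ Finset.univ.filter (fun j => j < i),
                p j / dist (s j) (t i) ^ κ) + ξ / η)
            ≤ m * σ * R ^ κ * ((∑ j ∈ Finset.univ.filter (fun j => j < i),
                p j / dist (s j) (t i) ^ κ) + ξ / η) :=
              mul_le_mul_of_nonneg_right hA hB
          _ ≤ m * σ * R ^ κ * (P / R ^ κ * φ + ξ / η) := by
              apply mul_le_mul_of_nonneg_left _ (by positivity)
              linarith
          _ = P := by
              rw [hPdef]
              field_simp
              ring
  exact fun i => (key n i i.2).2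
end

section
/- If 0 < φ ≤ 1/(4β^κ σ(σ+1)) and m lies in the interval [(1−√(1−4β^κφσ(σ+1)))/(2β^κφσ(σ+1)), (1+√(1−4β^κφσ(σ+1)))/(2β^κφσ(σ+1))], then mσβ^κφ ≤ 1/(1+σ) < 1 and (1+mσ)β^κφ/(1−mσβ^κφ) ≤ (m−1)/(mσ). -/
theorem stmt_14 (β κ σ φ m : ℝ) (hβ : 0 < β) (hσ : 0 < σ) (hφ : 0 < φ) (hm : 0 < m)
    (hφ' : φ ≤ 1 / (4 * β ^ κ * σ * (σ + 1)))
    (hmem : m ∈ Set.Icc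
      ((1 - Real.sqrt (1 - 4 * β ^ κ * φ * σ * (σ + 1))) /
        (2 * β ^ κ * φ * σ * (σ + 1)))
      ((1 + Real.sqrt (1 - 4 * β ^ κ * φ * σ * (σ + 1))) /
        (2 * β ^ κ * φ * σ * (σ + 1)))) :
    m * σ * β ^ κ * φ ≤ 1 / (1 + σ) ∧ 1 / (1 + σ) < 1 ∧
      (1 + m * σ) * β ^ κ * φ / (1 - m * σ * β ^ κ * φ) ≤ (m - 1) / (m * σ) := by
  have ha : 0 < β ^ κ := Real.rpow_pos_of_pos hβ κ
  set a := β ^ κ with haa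
  have hc : 0 < a * φ * σ * (σ + 1) := by positivity
  have h4c : 4 * (a * φ * σ * (σ + 1)) ≤ 1 := by
    rw [le_div_iff₀ (by positivity)] at hφ'
    nlinarith
  have hnn : (0:ℝ) ≤ 1 - 4 * a * φ * σ * (σ + 1) := by linarith
  set s := Real.sqrt (1 - 4 * a * φ * σ * (σ + 1)) with hs
  have hs2 : s ^ 2 = 1 - 4 * a * φ * σ * (σ + 1) := Real.sq_sqrt hnn
  obtain ⟨h1, h2⟩ := hmem
  rw [div_le_iff₀ (by positivity)] at h1
  rw [le_div_iff₀ (by positivity)] at h2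
  -- key quadratic inequality
  have hK : (a * φ * σ * (σ + 1)) * m ^ 2 ≤ m - 1 := by nlinarith
  have hm1 : 1 < m := by nlinarith [mul_pos hc (pow_pos hm 2)]
  have hsmall : m * σ * a * φ ≤ 1 / (1 + σ) := by
    rw [le_div_iff₀ (by linarith)]
    nlinarith
  refine ⟨hsmall, ?_, ?_⟩
  · rw [div_lt_one (by linarith)]; linarith
  · have hden : 0 < 1 - m * σ * a * φ := by
      have : (1:ℝ) / (1 + σ) < 1 := by rw [div_lt_one (by linarith)]; linarith
      linarith
    rw [div_le_div_iff₀ hden (by positivity)]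
    nlinarith
end

section
/- Let L_D be a set of links of length in [r,R] whose endpoints all have pairwise distance at least r = δR, and suppose each link's fixed transmission power lies in [P_min, P_max] with ρ = P_max/P_min. Then the affectance of any link l_i ∈ L_D caused by the other links is at most c^{up}·ρ·φ, where φ = 2^{2κ+1}√3 π κ / (6(κ−2)δ^κ). -/
/-!
Fix the receiver `t i`. The other senders are `δR`-separated and at distance at least `δR` from
`t i`. Sorting them into annuli `kδR ≤ dist < (k+1)δR` with `k ≥ 1`, the disjoint balls of radius
`δR/2` around the senders of annulus `k` fill an area at most that of the annulus widened by `δR/2`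
on each side, so it holds at most `16k + 8 ≤ 24k` of them, each contributing at most
`(Pmax/Pmin) (R/(kδR))^κ`. Summing over `k` and comparing `∑ k^(1-κ)` with `∫ x^(1-κ)` bounds the
affectance by `cup (Pmax/Pmin) 24 (1 + 1/(κ-2)) / δ^κ`, which is below `cup ρ φ`.
-/

open Metric MeasureTheory Module

variable {ι E : Type*} [NormedAddCommGroup E] [NormedSpace ℝ E] [FiniteDimensional ℝ E]

theorem card_mul_pow_add_pow_le_of_separated [Nontrivial E] (F : Finset ι) (x : ι → E) (T : E)
    {ε a b : ℝ} (hε : 0 ≤ ε) (ha : ε / 2 ≤ a) (hab : a ≤ b)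
    (hsep : ∀ j ∈ F, ∀ j' ∈ F, j ≠ j' → ε ≤ dist (x j) (x j'))
    (hx : ∀ j ∈ F, a ≤ dist (x j) T ∧ dist (x j) T ≤ b) :
    F.card * (ε / 2) ^ finrank ℝ E + (a - ε / 2) ^ finrank ℝ E ≤
      (b + ε / 2) ^ finrank ℝ E := by
  borelize E
  set μ : Measure E := Measure.addHaar
  have hε2 : 0 ≤ ε / 2 := by linarith
  have hdisj : (F : Set ι).PairwiseDisjoint fun j => ball (x j) (ε / 2) :=
    fun j hj j' hj' hjj' => ball_disjoint_ball (by linarith [hsep j hj j' hj' hjj'])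
  have hinner : Disjoint (⋃ j ∈ F, ball (x j) (ε / 2)) (ball T (a - ε / 2)) := by
    refine Set.disjoint_left.2 fun y hy hyT => ?_
    obtain ⟨j, hj, hyj⟩ := Set.mem_iUnion₂.1 hy
    linarith [(hx j hj).1, mem_ball.1 hyj, mem_ball.1 hyT, dist_triangle_left (x j) T y]
  have hsub : (⋃ j ∈ F, ball (x j) (ε / 2)) ∪ ball T (a - ε / 2) ⊆ closedBall T (b + ε / 2) := by
    refine Set.union_subset (Set.iUnion₂_subset fun j hj y hyj => ?_) fun y hyT => ?_
    · exact mem_closedBall.2 (by linarith [(hx j hj).2, mem_ball.1 hyj, dist_triangle y (x j) T])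
    · exact mem_closedBall.2 (by linarith [mem_ball.1 hyT])
  have hvol := measure_mono (μ := μ) hsub
  rw [measure_union hinner measurableSet_ball,
    measure_biUnion_finset hdisj fun _ _ => measurableSet_ball,
    Measure.addHaar_closedBall μ T (by linarith), Measure.addHaar_ball μ T (by linarith)] at hvol
  simp only [Measure.addHaar_ball μ _ hε2, Finset.sum_const, nsmul_eq_mul, ← mul_assoc,
    ← add_mul] at hvol
  rw [ENNReal.mul_le_mul_iff_left (measure_ball_pos μ 0 one_pos).ne' measure_ball_lt_top.ne,
    ← ENNReal.ofReal_natCast, ← ENNReal.ofReal_mul (by positivity),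
    ← ENNReal.ofReal_add (by positivity) (pow_nonneg (by linarith) _)] at hvol
  exact (ENNReal.ofReal_le_ofReal_iff (pow_nonneg (by linarith) _)).1 hvol

theorem card_le_of_separated_of_finrank_eq_two (hE : finrank ℝ E = 2) (F : Finset ι) (x : ι → E)
    (T : E) {ε : ℝ} (hε : 0 < ε) (hsep : ∀ j ∈ F, ∀ j' ∈ F, j ≠ j' → ε ≤ dist (x j) (x j'))
    {k : ℕ} (hk : 1 ≤ k) (hx : ∀ j ∈ F, k * ε ≤ dist (x j) T ∧ dist (x j) T ≤ (k + 1) * ε) :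
    (F.card : ℝ) ≤ 16 * k + 8 := by
  have : Nontrivial E := Module.nontrivial_of_finrank_eq_succ hE
  have hk' : (1 : ℝ) ≤ k := by exact_mod_cast hk
  have hpack :=
    card_mul_pow_add_pow_le_of_separated F x T hε.le (by nlinarith) (by nlinarith) hsep hx
  rw [hE] at hpack
  nlinarith [mul_pos hε hε]

theorem sum_natCast_rpow_neg_le {s : ℝ} (hs : 1 < s) (S : Finset ℕ) :
    ∑ k ∈ S, (k : ℝ) ^ (-s) ≤ 1 + 1 / (s - 1) := by
  set N := S.sup id
  have hS : S ⊆ Finset.range (N + 2) := fun k hk =>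
    Finset.mem_range.2 (Nat.lt_add_right 1 (Nat.lt_succ_of_le (Finset.le_sup (f := id) hk)))
  have hanti : AntitoneOn (fun y : ℝ => y ^ (-s)) (Set.Icc 1 (1 + N)) := fun y hy z _ hyz =>
    Real.rpow_le_rpow_of_nonpos (zero_lt_one.trans_le hy.1) hyz (by linarith)
  have hint : ∫ y in (1 : ℝ)..1 + N, y ^ (-s) = (1 - (1 + N : ℝ) ^ (1 - s)) / (s - 1) := by
    rw [integral_rpow (Or.inr ⟨by linarith, fun h => ?_⟩), Real.one_rpow]
    · rw [div_eq_div_iff (by linarith) (by linarith)]; ring_nf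
    · rcases Set.mem_uIcc.1 h with h | h <;> linarith [h.1, h.2, (N.cast_nonneg : (0 : ℝ) ≤ N)]
  calc ∑ k ∈ S, (k : ℝ) ^ (-s)
      ≤ ∑ k ∈ Finset.range (N + 2), (k : ℝ) ^ (-s) :=
        Finset.sum_le_sum_of_subset_of_nonneg hS fun k _ _ => Real.rpow_nonneg k.cast_nonneg _
    _ = 1 + ∑ i ∈ Finset.range N, (1 + ((i + 1 : ℕ) : ℝ)) ^ (-s) := by
        rw [Finset.sum_range_succ', Finset.sum_range_succ']
        simp [Real.zero_rpow (by linarith : -s ≠ 0), add_comm]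
    _ ≤ 1 + (1 - (1 + N : ℝ) ^ (1 - s)) / (s - 1) := by
        rw [← hint]; gcongr; exact hanti.sum_le_integral
    _ ≤ 1 + 1 / (s - 1) := by
        gcongr
        linarith [Real.rpow_nonneg (by positivity : (0 : ℝ) ≤ 1 + N) (1 - s)]

theorem sum_div_dist_rpow_le_of_separated (hE : finrank ℝ E = 2) (F : Finset ι) (x : ι → E)
    (T : E) {ε κ : ℝ} (hε : 0 < ε) (hκ : 2 < κ)
    (hsep : ∀ j ∈ F, ∀ j' ∈ F, j ≠ j' → ε ≤ dist (x j) (x j'))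
    (hfar : ∀ j ∈ F, ε ≤ dist (x j) T) :
    ∑ j ∈ F, (ε / dist (x j) T) ^ κ ≤ 24 * (1 + 1 / (κ - 2)) := by
  set K : ι → ℕ := fun j => ⌊dist (x j) T / ε⌋₊
  have hK1 : ∀ j ∈ F, 1 ≤ K j := fun j hj =>
    Nat.le_floor (by rw [Nat.cast_one, le_div_iff₀ hε, one_mul]; exact hfar j hj)
  have hKdist : ∀ j, K j * ε ≤ dist (x j) T ∧ dist (x j) T ≤ (K j + 1) * ε := fun j =>
    ⟨(le_div_iff₀ hε).1 (Nat.floor_le (by positivity)),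
      (div_le_iff₀ hε).1 (Nat.lt_floor_add_one _).le⟩
  have hcard : ∀ k ∈ F.image K, 1 ≤ k ∧ ((F.filter (K · = k)).card : ℝ) ≤ 16 * k + 8 := by
    intro k hk
    obtain ⟨j, hj, rfl⟩ := Finset.mem_image.1 hk
    refine ⟨hK1 j hj, card_le_of_separated_of_finrank_eq_two hE _ x T hε
      (fun j₁ h₁ j₂ h₂ => hsep j₁ (Finset.mem_filter.1 h₁).1 j₂ (Finset.mem_filter.1 h₂).1)
      (hK1 j hj) fun j' hj' => (Finset.mem_filter.1 hj').2 ▸ hKdist j'⟩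
  calc ∑ j ∈ F, (ε / dist (x j) T) ^ κ
      ≤ ∑ j ∈ F, (K j : ℝ) ^ (-κ) := by
        refine Finset.sum_le_sum fun j hj => ?_
        have hK : (0 : ℝ) < K j := by exact_mod_cast hK1 j hj
        rw [Real.rpow_neg hK.le, ← Real.inv_rpow hK.le]
        refine Real.rpow_le_rpow (by positivity) ?_ (by linarith)
        rw [div_le_iff₀ (hε.trans_le (hfar j hj)), ← div_eq_inv_mul, le_div_iff₀ hK, mul_comm]
        exact (hKdist j).1
    _ = ∑ k ∈ F.image K, ((F.filter (K · = k)).card : ℝ) * (k : ℝ) ^ (-κ) := by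
        simpa only [nsmul_eq_mul] using Finset.sum_comp (fun k : ℕ => (k : ℝ) ^ (-κ)) K
    _ ≤ ∑ k ∈ F.image K, 24 * (k : ℝ) ^ (-(κ - 1)) := by
        refine Finset.sum_le_sum fun k hk => ?_
        have hk : (1 : ℝ) ≤ k := by exact_mod_cast (hcard k hk).1
        calc ((F.filter (K · = k)).card : ℝ) * (k : ℝ) ^ (-κ)
            ≤ 24 * k * (k : ℝ) ^ (-κ) := by gcongr; linarith [(hcard k ‹_›).2]
          _ = 24 * (k : ℝ) ^ (-(κ - 1)) := by
            rw [neg_sub, sub_eq_neg_add, Real.rpow_add (by linarith), Real.rpow_one]; ring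
    _ ≤ 24 * (1 + 1 / (κ - 2)) := by
        rw [← Finset.mul_sum]
        have := sum_natCast_rpow_neg_le (s := κ - 1) (by linarith) (F.image K)
        rw [sub_sub, one_add_one_eq_two] at this
        gcongr

theorem twentyFour_mul_div_rpow_le {δ κ : ℝ} (hδ : 0 < δ) (hκ : 2 < κ) :
    24 * (1 + 1 / (κ - 2)) / δ ^ κ ≤
      2 ^ (2 * κ + 1) * Real.sqrt 3 * Real.pi * κ / (6 * (κ - 2) * δ ^ κ) := by
  have h32 : (32 : ℝ) ≤ 2 ^ (2 * κ + 1) := by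
    calc (32 : ℝ) = 2 ^ (5 : ℝ) := by norm_num
      _ ≤ 2 ^ (2 * κ + 1) := Real.rpow_le_rpow_of_exponent_le one_le_two (by linarith)
  have hsqrt : (1.7 : ℝ) ≤ Real.sqrt 3 := Real.le_sqrt_of_sq_le (by norm_num)
  have hprod : (144 : ℝ) ≤ 2 ^ (2 * κ + 1) * Real.sqrt 3 * Real.pi := by
    have := mul_le_mul (mul_le_mul h32 hsqrt (by norm_num) (by linarith)) Real.pi_gt_three.le
      (by norm_num) (by positivity)
    linarith
  have hlhs : 24 * (1 + 1 / (κ - 2)) / δ ^ κ = 144 * (κ - 1) / (6 * (κ - 2) * δ ^ κ) := by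
    have : κ - 2 ≠ 0 := by linarith
    field_simp
    ring
  rw [hlhs]
  gcongr <;> linarith

theorem div_mul_rpow_le_div_mul_div_rpow {pi pj Pmin Pmax D d R κ : ℝ} (hPmin : 0 < Pmin)
    (hpi : Pmin ≤ pi) (hpj : pj ≤ Pmax) (hpj0 : 0 ≤ pj) (hD0 : 0 ≤ D) (hD : D ≤ R) (hd : 0 < d)
    (hκ : 0 ≤ κ) :
    pj * D ^ κ / (pi * d ^ κ) ≤ Pmax / Pmin * (R / d) ^ κ := by
  have hPmax : 0 ≤ Pmax := hpj0.trans hpj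
  have hR : 0 ≤ R := hD0.trans hD
  rw [Real.div_rpow hR hd.le, div_mul_div_comm]
  gcongr

theorem stmt_16_general (n : ℕ) (s t : Fin n → EuclideanSpace ℝ (Fin 2)) (p c : Fin n → ℝ)
    (r R δ κ Pmin Pmax cup : ℝ) (hκ : 2 < κ) (hδ : 0 < δ) (hR : 0 < R)
    (hnodesep : ∀ x y : Fin n ⊕ Fin n, x ≠ y →
      δ * R ≤ dist (Sum.elim s t x) (Sum.elim s t y))
    (hlen : ∀ i, r ≤ dist (s i) (t i) ∧ dist (s i) (t i) ≤ R)
    (hPmin : 0 < Pmin) (hp : ∀ i, Pmin ≤ p i ∧ p i ≤ Pmax)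
    (hc : ∀ i, 0 < c i ∧ c i ≤ cup) :
    ∀ i, c i * ∑ j ∈ Finset.univ.filter (fun j => j ≠ i),
        (p j * dist (s i) (t i) ^ κ) / (p i * dist (s j) (t i) ^ κ) ≤
      cup * (Pmax / Pmin) *
        (2 ^ (2 * κ + 1) * Real.sqrt 3 * Real.pi * κ / (6 * (κ - 2) * δ ^ κ)) := by
  intro i
  have hε : 0 < δ * R := by positivity
  have hfar : ∀ j, δ * R ≤ dist (s j) (t i) := fun j => hnodesep (.inl j) (.inr i) (by simp)
  have hsep : ∀ j ∈ Finset.univ.filter (· ≠ i), ∀ j' ∈ Finset.univ.filter (· ≠ i), j ≠ j' →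
      δ * R ≤ dist (s j) (s j') := fun j _ j' _ h => hnodesep (.inl j) (.inl j') (by simpa using h)
  have hsum : ∑ j ∈ Finset.univ.filter (· ≠ i), (R / dist (s j) (t i)) ^ κ ≤
      24 * (1 + 1 / (κ - 2)) / δ ^ κ := by
    rw [le_div_iff₀ (by positivity), Finset.sum_mul]
    refine le_of_eq_of_le (Finset.sum_congr rfl fun j _ => ?_)
      (sum_div_dist_rpow_le_of_separated finrank_euclideanSpace_fin _ s (t i) hε hκ hsep
        fun j _ => hfar j)
    rw [mul_div_assoc, Real.mul_rpow hδ.le (div_nonneg hR.le dist_nonneg), mul_comm]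
  have hcup : 0 ≤ cup := (hc i).1.le.trans (hc i).2
  have hρ : 0 ≤ Pmax / Pmin := div_nonneg (hPmin.le.trans ((hp i).1.trans (hp i).2)) hPmin.le
  calc c i * ∑ j ∈ Finset.univ.filter (· ≠ i),
        (p j * dist (s i) (t i) ^ κ) / (p i * dist (s j) (t i) ^ κ)
      ≤ c i * (Pmax / Pmin * ∑ j ∈ Finset.univ.filter (· ≠ i), (R / dist (s j) (t i)) ^ κ) := by
        refine mul_le_mul_of_nonneg_left ?_ (hc i).1.le
        rw [Finset.mul_sum]
        exact Finset.sum_le_sum fun j _ => div_mul_rpow_le_div_mul_div_rpow hPmin (hp i).1 (hp j).2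
          (hPmin.le.trans (hp j).1) dist_nonneg (hlen i).2 (hε.trans_le (hfar j)) (by linarith)
    _ ≤ cup * (Pmax / Pmin * (24 * (1 + 1 / (κ - 2)) / δ ^ κ)) := by gcongr; exact (hc i).2
    _ ≤ cup * (Pmax / Pmin *
          (2 ^ (2 * κ + 1) * Real.sqrt 3 * Real.pi * κ / (6 * (κ - 2) * δ ^ κ))) := by
        exact mul_le_mul_of_nonneg_left
          (mul_le_mul_of_nonneg_left (twentyFour_mul_div_rpow_le hδ hκ) hρ) hcup
    _ = _ := by ring

theorem stmt_16 (n : ℕ) (s t : Fin n → EuclideanSpace ℝ (Fin 2)) (p c : Fin n → ℝ)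
    (r R δ κ Pmin Pmax cup : ℝ) (hκ : 2 < κ) (hδ : 0 < δ) (hδ1 : δ ≤ 1) (hR : 0 < R)
    (hrdef : r = δ * R)
    (hinj : Function.Injective (Sum.elim s t))
    (hnodesep : ∀ x y : Fin n ⊕ Fin n, x ≠ y →
      δ * R ≤ dist (Sum.elim s t x) (Sum.elim s t y))
    (hlen : ∀ i, r ≤ dist (s i) (t i) ∧ dist (s i) (t i) ≤ R)
    (hPmin : 0 < Pmin) (hp : ∀ i, Pmin ≤ p i ∧ p i ≤ Pmax)
    (hc : ∀ i, 0 < c i ∧ c i ≤ cup) :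
    ∀ i, c i * ∑ j ∈ Finset.univ.filter (fun j => j ≠ i),
        (p j * dist (s i) (t i) ^ κ) / (p i * dist (s j) (t i) ^ κ) ≤
      cup * (Pmax / Pmin) *
        (2 ^ (2 * κ + 1) * Real.sqrt 3 * Real.pi * κ / (6 * (κ - 2) * δ ^ κ)) :=
  stmt_16_general n s t p c r R δ κ Pmin Pmax cup hκ hδ hR hnodesep hlen hPmin hp hc
end
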